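/- arXiv:2111.02361 — 2 statements merged into one kernel-verified Lean document; each statement's English description precedes it below -/
import Mathlib

section
/- Let G = (V,E) be a finite weighted undirected graph, s ∈ V, φ ≥ 0, and let X := V \ ct(s,φ) be the complement of the cut threshold ct(s,φ) = {t ≠ s : λ(s,t) ≤ φ}. Then X respects the extreme sets of G: for any extreme set Y, either Y ⊆ X, or X ⊆ Y, or X ∩ Y = ∅. -/
/-! Write `X = V \ ct(s,φ)`. Let `u ∈ Y` lie in the threshold and let `Z` be a minimum `u`–`s`
cut; every vertex of `Z` is then in the threshold as well. If `X` split `Y` in a forbidden way,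
`Z` would cut `Y` properly, so extremality and submodularity give `δ(Y ∪ Z) < δ(Z) ≤ φ`. When
`s ∈ Y`, the side `(Y ∪ Z)ᶜ` then pushes a vertex of `X \ Y` into the threshold; when `s ∉ Y`,
the side `Y ∪ Z` is a `u`–`s` cut cheaper than the minimum one. -/

open Finset
open scoped Classical

variable {V : Type*} [Fintype V] [DecidableEq V]

def cutVal (w : V → V → ℝ) (X : Finset V) : ℝ := ∑ u ∈ X, ∑ v ∈ Xᶜ, w u v

def IsExtremeSet (w : V → V → ℝ) (X : Finset V) : Prop :=
  X.Nonempty ∧ X ≠ Finset.univ ∧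
    ∀ Y : Finset V, Y.Nonempty → Y ⊂ X → cutVal w X < cutVal w Y

noncomputable def lam (w : V → V → ℝ) (s t : V) : ℝ :=
  sInf {x : ℝ | ∃ Z : Finset V, t ∈ Z ∧ s ∉ Z ∧ cutVal w Z = x}

noncomputable def ct (w : V → V → ℝ) (s : V) (φ : ℝ) : Finset V :=
  Finset.univ.filter (fun t => t ≠ s ∧ lam w s t ≤ φ)

variable {w : V → V → ℝ}

lemma cutVal_eq_sum_ite (w : V → V → ℝ) (X : Finset V) :
    cutVal w X = ∑ u, ∑ v, if u ∈ X ∧ v ∉ X then w u v else 0 := by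
  simp only [cutVal, ite_and, ← mem_compl, sum_ite_irrel, sum_const_zero, sum_ite_mem, univ_inter]

lemma cutVal_inter_add_cutVal_union_le (hnonneg : ∀ u v, 0 ≤ w u v) (A B : Finset V) :
    cutVal w (A ∩ B) + cutVal w (A ∪ B) ≤ cutVal w A + cutVal w B := by
  simp only [cutVal_eq_sum_ite, ← Finset.sum_add_distrib]
  refine Finset.sum_le_sum fun u _ => Finset.sum_le_sum fun v _ => ?_
  have := hnonneg u v
  by_cases ha : u ∈ A <;> by_cases hb : u ∈ B <;> by_cases hc : v ∈ A <;> by_cases hd : v ∈ B <;>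
    simp [ha, hb, hc, hd] <;> linarith

lemma cutVal_compl (hsymm : ∀ u v, w u v = w v u) (X : Finset V) :
    cutVal w Xᶜ = cutVal w X := by
  rw [cutVal, compl_compl, Finset.sum_comm]
  exact Finset.sum_congr rfl fun u _ => Finset.sum_congr rfl fun v _ => hsymm v u

lemma finite_cutVal_separating (w : V → V → ℝ) (s t : V) :
    {x : ℝ | ∃ Z : Finset V, t ∈ Z ∧ s ∉ Z ∧ cutVal w Z = x}.Finite :=
  (Set.finite_range (cutVal w)).subset fun _ ⟨Z, _, _, hZ⟩ => ⟨Z, hZ⟩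

lemma lam_le_cutVal {s t : V} {Z : Finset V} (ht : t ∈ Z) (hs : s ∉ Z) :
    lam w s t ≤ cutVal w Z :=
  csInf_le (finite_cutVal_separating w s t).bddBelow ⟨Z, ht, hs, rfl⟩

lemma exists_cutVal_eq_lam (w : V → V → ℝ) {s t : V} (hts : t ≠ s) :
    ∃ Z : Finset V, t ∈ Z ∧ s ∉ Z ∧ cutVal w Z = lam w s t :=
  Set.Nonempty.csInf_mem (s := {x | ∃ Z : Finset V, t ∈ Z ∧ s ∉ Z ∧ cutVal w Z = x})
    ⟨_, {t}, mem_singleton_self t, by simpa using hts.symm, rfl⟩ (finite_cutVal_separating w s t)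

lemma mem_ct {s t : V} {φ : ℝ} : t ∈ ct w s φ ↔ t ≠ s ∧ lam w s t ≤ φ := by
  simp [ct]

lemma subset_ct_of_cutVal_le {s : V} {φ : ℝ} {Z : Finset V} (hs : s ∉ Z)
    (hZ : cutVal w Z ≤ φ) : Z ⊆ ct w s φ :=
  fun _ ht => mem_ct.2 ⟨fun h => hs (h ▸ ht), (lam_le_cutVal ht hs).trans hZ⟩

lemma exists_cut_subset_ct {s u : V} {φ : ℝ} (hu : u ∈ ct w s φ) :
    ∃ Z : Finset V, u ∈ Z ∧ s ∉ Z ∧ cutVal w Z = lam w s u ∧ Z ⊆ ct w s φ := by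
  obtain ⟨hus, hφ⟩ := mem_ct.1 hu
  obtain ⟨Z, huZ, hsZ, hZ⟩ := exists_cutVal_eq_lam w hus
  exact ⟨Z, huZ, hsZ, hZ, subset_ct_of_cutVal_le hsZ (hZ.trans_le hφ)⟩

namespace IsExtremeSet

variable {Y : Finset V}

lemma cutVal_union_lt (hnonneg : ∀ u v, 0 ≤ w u v) (hY : IsExtremeSet w Y) {Z : Finset V}
    (hYZ : (Y ∩ Z).Nonempty) (hY_not_subset : ¬Y ⊆ Z) :
    cutVal w (Y ∪ Z) < cutVal w Z := by
  have hlt : cutVal w Y < cutVal w (Y ∩ Z) := hY.2.2 _ hYZ (inf_lt_left.2 hY_not_subset)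
  linarith [cutVal_inter_add_cutVal_union_le hnonneg Y Z]

lemma compl_ct_subset_of_mem (hsymm : ∀ u v, w u v = w v u) (hnonneg : ∀ u v, 0 ≤ w u v)
    (hY : IsExtremeSet w Y) {s : V} {φ : ℝ} (hsY : s ∈ Y) (hY_not_subset : ¬Y ⊆ (ct w s φ)ᶜ) :
    (ct w s φ)ᶜ ⊆ Y := by
  obtain ⟨u, huY, hu⟩ := not_subset.1 hY_not_subset
  obtain ⟨Z, huZ, hsZ, hZ, hZct⟩ := exists_cut_subset_ct (not_not.1 (mem_compl.not.1 hu))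
  intro t htX
  by_contra htY
  have hlt := hY.cutVal_union_lt hnonneg ⟨u, mem_inter.2 ⟨huY, huZ⟩⟩ fun h => hsZ (h hsY)
  have hφ : cutVal w (Y ∪ Z)ᶜ ≤ φ := by
    rw [cutVal_compl hsymm]
    linarith [(mem_ct.1 (hZct huZ)).2]
  have htZ : t ∉ Z := fun h => mem_compl.1 htX (hZct h)
  exact mem_compl.1 htX <| subset_ct_of_cutVal_le (by simp [hsY]) hφ (by simp [htY, htZ])

lemma subset_compl_ct_of_not_mem (hnonneg : ∀ u v, 0 ≤ w u v) (hY : IsExtremeSet w Y)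
    {s : V} {φ : ℝ} (hsY : s ∉ Y) (hXY : ((ct w s φ)ᶜ ∩ Y).Nonempty) :
    Y ⊆ (ct w s φ)ᶜ := by
  obtain ⟨t, ht⟩ := hXY
  obtain ⟨htX, htY⟩ := mem_inter.1 ht
  intro u huY
  by_contra hu
  obtain ⟨Z, huZ, hsZ, hZ, hZct⟩ := exists_cut_subset_ct (not_not.1 (mem_compl.not.1 hu))
  have hlt := hY.cutVal_union_lt hnonneg ⟨u, mem_inter.2 ⟨huY, huZ⟩⟩
    fun h => mem_compl.1 htX (hZct (h htY))
  have hle := lam_le_cutVal (w := w) (s := s) (mem_union_left Z huY) (by simp [hsY, hsZ])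
  linarith

end IsExtremeSet

theorem compl_cutThreshold_respects_extreme_general (w : V → V → ℝ)
    (hsymm : ∀ u v, w u v = w v u) (hnonneg : ∀ u v, 0 ≤ w u v)
    (s : V) (φ : ℝ)
    (Y : Finset V) (hY : IsExtremeSet w Y) :
    Y ⊆ (ct w s φ)ᶜ ∨ (ct w s φ)ᶜ ⊆ Y ∨ (ct w s φ)ᶜ ∩ Y = ∅ := by
  by_cases hsY : s ∈ Y
  · by_cases hYX : Y ⊆ (ct w s φ)ᶜ
    · exact Or.inl hYX
    · exact Or.inr (Or.inl (hY.compl_ct_subset_of_mem hsymm hnonneg hsY hYX))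
  · rcases ((ct w s φ)ᶜ ∩ Y).eq_empty_or_nonempty with hXY | hXY
    · exact Or.inr (Or.inr hXY)
    · exact Or.inl (hY.subset_compl_ct_of_not_mem hnonneg hsY hXY)

/-- The complement `X = V \ ct(s,φ)` of a cut threshold respects the extreme sets:
every extreme set `Y` satisfies `Y ⊆ X`, `X ⊆ Y`, or `X ∩ Y = ∅`. -/
theorem compl_cutThreshold_respects_extreme (w : V → V → ℝ)
    (hsymm : ∀ u v, w u v = w v u) (hnonneg : ∀ u v, 0 ≤ w u v)
    (s : V) (φ : ℝ) (hφ : 0 ≤ φ)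
    (Y : Finset V) (hY : IsExtremeSet w Y) :
    Y ⊆ (ct w s φ)ᶜ ∨ (ct w s φ)ᶜ ⊆ Y ∨ (ct w s φ)ᶜ ∩ Y = ∅ :=
  compl_cutThreshold_respects_extreme_general w hsymm hnonneg s φ Y hY
end

section
/- Let T be a rooted tree whose leaves are the vertices V of a weighted graph G, such that every internal node has at least two children, every extreme set of G appears as the leaf set V(y) of some subtree rooted at a node y, and inductively, after processing, the subtree below any node y exactly represents the extreme sets properly contained in V(y). Consider the pruning rule: remove node y iff some child x of y satisfies δ(V(x)) ≤ δ(V(y)). Then a node y is kept by this rule if and only if V(y) is an extreme set of G. -/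
/-!
If `V(y)` is not extreme, some nonempty `Y ⊊ V(y)` has `δ(Y) ≤ δ(V(y))`; shrinking `Y` to an
extreme `Z` with `δ(Z) ≤ δ(Y)`, the child `x` whose leaf set contains `Z` has
`δ(V(x)) ≤ δ(Z)` because `V(x)` is extreme, so `y` is pruned. Conversely children of an
extreme `V(y)` are nonempty proper subsets, hence have larger cut value.
-/

open Finset

variable {V ι : Type*} [Fintype V] [DecidableEq V] [DecidableEq ι]

theorem IsExtremeSet.cutVal_le_of_subset {w : V → V → ℝ} {X Z : Finset V}
    (hX : IsExtremeSet w X) (hZ : Z.Nonempty) (hZX : Z ⊆ X) : cutVal w X ≤ cutVal w Z := by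
  rcases hZX.eq_or_ssubset with rfl | hlt
  · exact le_rfl
  · exact (hX.2.2 Z hZ hlt).le

theorem exists_isExtremeSet_subset_cutVal_le (w : V → V → ℝ) {Y : Finset V}
    (hne : Y.Nonempty) (huniv : Y ≠ univ) :
    ∃ Z ⊆ Y, IsExtremeSet w Z ∧ cutVal w Z ≤ cutVal w Y := by
  induction Y using Finset.strongInduction with
  | _ Y ih =>
    by_cases hext : IsExtremeSet w Y
    · exact ⟨Y, subset_rfl, hext, le_rfl⟩
    obtain ⟨W, hWne, hWY, hWle⟩ : ∃ W : Finset V, W.Nonempty ∧ W ⊂ Y ∧ cutVal w W ≤ cutVal w Y := by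
      simpa [IsExtremeSet, hne, huniv] using hext
    have hWuniv : W ≠ univ := fun h => hWY.not_subset (h ▸ subset_univ Y)
    obtain ⟨Z, hZW, hZext, hZle⟩ := ih W hWY hWne hWuniv
    exact ⟨Z, hZW.trans hWY.subset, hZext, hZle.trans hWle⟩

theorem pruning_rule_correct_general (w : V → V → ℝ)
    (children : ι → Finset ι) (val : ι → Finset V) (y : ι)
    (hne : (val y).Nonempty) (hproper : val y ≠ Finset.univ)
    (hchild : ∀ x ∈ children y,
      (val x).Nonempty ∧ val x ⊂ val y ∧ IsExtremeSet w (val x))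
    (hcover : ∀ Z : Finset V, IsExtremeSet w Z → Z ⊂ val y →
      ∃ x ∈ children y, Z ⊆ val x) :
    (∀ x ∈ children y, cutVal w (val y) < cutVal w (val x)) ↔
      IsExtremeSet w (val y) := by
  refine ⟨fun hkeep => ⟨hne, hproper, fun Y hYne hYy => ?_⟩,
    fun hext x hx => hext.2.2 (val x) (hchild x hx).1 (hchild x hx).2.1⟩
  have hYuniv : Y ≠ univ := fun h => hYy.not_subset (h ▸ subset_univ (val y))
  obtain ⟨Z, hZY, hZext, hZle⟩ := exists_isExtremeSet_subset_cutVal_le w hYne hYuniv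
  obtain ⟨x, hx, hZx⟩ := hcover Z hZext (hZY.trans_ssubset hYy)
  calc cutVal w (val y) < cutVal w (val x) := hkeep x hx
    _ ≤ cutVal w Z := (hchild x hx).2.2.cutVal_le_of_subset hZext.1 hZx
    _ ≤ cutVal w Y := hZle

/-- Correctness of the pruning rule in the second phase: a node `y` of the tree
(whose children are `children y`, each child leaf-set being a nonempty proper
subset of `V(y)` that is extreme, with every extreme proper subset of `V(y)`
contained in the leaf-set of some child, and leaves being singletons) is kept
(i.e. every child has strictly larger cut value) if and only if `V(y)` is an
extreme set of `G`. -/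
theorem pruning_rule_correct (w : V → V → ℝ)
    (hsymm : ∀ u v, w u v = w v u) (hnonneg : ∀ u v, 0 ≤ w u v)
    (children : ι → Finset ι) (val : ι → Finset V) (y : ι)
    (hne : (val y).Nonempty) (hproper : val y ≠ Finset.univ)
    (hchild : ∀ x ∈ children y,
      (val x).Nonempty ∧ val x ⊂ val y ∧ IsExtremeSet w (val x))
    (hcover : ∀ Z : Finset V, IsExtremeSet w Z → Z ⊂ val y →
      ∃ x ∈ children y, Z ⊆ val x)
    (hleaf : children y = ∅ → ∃ v : V, val y = {v}) :
    (∀ x ∈ children y, cutVal w (val y) < cutVal w (val x)) ↔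
      IsExtremeSet w (val y) :=
  pruning_rule_correct_general w children val y hne hproper hchild hcover
end
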